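/- arXiv:1706.06825 — 7 statements merged into one kernel-verified Lean document; each statement's English description precedes it below -/
import Mathlib

section
/- Let (V,𝓑) be a t-(v,k,λ) covering and let X ⊆ V with |X| ≤ t. Then the number of blocks of 𝓑 containing X is at least C_λ(v−|X|, k−|X|, t−|X|). -/
/-!
The blocks containing `X`, with `X` removed, form a `(t-|X|)-(v-|X|, k-|X|, λ)` covering of
`V \ X`: a `(t-|X|)`-subset `T` of `V \ X` lies in `b \ X` exactly when the `t`-subset `T ∪ X`
lies in `b`. Relabelling `V \ X` by `Fin (v-|X|)` bounds the covering number by the number of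
these blocks.
-/

/-- A t-(v,k,λ) covering: V has v points, every block is a k-subset of V,
and every t-subset of V is contained in at least λ blocks. -/
def IsCovering {α : Type*} [DecidableEq α] (v k t lam : ℕ)
    (V : Finset α) (B : Multiset (Finset α)) : Prop :=
  V.card = v ∧ (∀ b ∈ B, b ⊆ V ∧ b.card = k) ∧
    ∀ T ⊆ V, T.card = t → lam ≤ Multiset.card (B.filter (fun b => T ⊆ b))

/-- The covering number C_λ(v,k,t): the minimum number of blocks of a t-(v,k,λ) covering. -/
noncomputable def coveringNumber (lam v k t : ℕ) : ℕ :=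
  sInf {n | ∃ B : Multiset (Finset (Fin v)), Multiset.card B = n ∧
    IsCovering v k t lam Finset.univ B}

namespace IsCovering

variable {α β : Type*} [DecidableEq α] [DecidableEq β] {v k t lam : ℕ}
  {V : Finset α} {B : Multiset (Finset α)}

theorem map (f : α ↪ β) (h : IsCovering v k t lam V B) :
    IsCovering v k t lam (V.map f) (B.map (Finset.map f)) := by
  obtain ⟨hV, hB, hT⟩ := h
  refine ⟨by rw [Finset.card_map, hV], ?_, ?_⟩
  · simp only [Multiset.mem_map, forall_exists_index, and_imp]
    rintro _ b hb rfl
    exact ⟨Finset.map_subset_map.2 (hB b hb).1, by rw [Finset.card_map, (hB b hb).2]⟩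
  · intro T hTV hTt
    obtain ⟨T', hT'V, rfl⟩ := Finset.subset_map_iff.1 hTV
    rw [Multiset.filter_map, Multiset.card_map]
    simpa only [Function.comp_def, Finset.map_subset_map] using
      hT T' hT'V (by rwa [Finset.card_map] at hTt)

theorem subtype (h : IsCovering v k t lam V B) :
    IsCovering v k t lam (Finset.univ : Finset V) (B.map (Finset.subtype (· ∈ V))) := by
  obtain ⟨hV, hB, hT⟩ := h
  refine ⟨by rw [Finset.card_univ, Fintype.card_coe, hV], ?_, ?_⟩
  · simp only [Multiset.mem_map, forall_exists_index, and_imp]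
    rintro _ b hb rfl
    refine ⟨Finset.subset_univ _, ?_⟩
    rw [Finset.card_subtype, Finset.filter_true_of_mem (hB b hb).1, (hB b hb).2]
  · intro T _ hTt
    have hlam := hT (T.map (Function.Embedding.subtype _))
      (fun x hx => by obtain ⟨y, -, rfl⟩ := Finset.mem_map.1 hx; exact y.2)
      (by rw [Finset.card_map, hTt])
    rw [Multiset.filter_map, Multiset.card_map]
    refine hlam.trans (Multiset.card_le_card (Multiset.monotone_filter_right _ ?_))
    intro b hb x hx
    exact Finset.mem_subtype.2 (hb (Finset.mem_map_of_mem _ hx))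

theorem derived (h : IsCovering v k t lam V B) {X : Finset α} (hXV : X ⊆ V)
    (hXt : X.card ≤ t) :
    IsCovering (v - X.card) (k - X.card) (t - X.card) lam (V \ X)
      ((B.filter (X ⊆ ·)).map (· \ X)) := by
  obtain ⟨hV, hB, hT⟩ := h
  refine ⟨by rw [Finset.card_sdiff_of_subset hXV, hV], ?_, ?_⟩
  · simp only [Multiset.mem_map, Multiset.mem_filter, forall_exists_index, and_imp]
    rintro _ b hb hXb rfl
    exact ⟨Finset.sdiff_subset_sdiff (hB b hb).1 le_rfl,
      by rw [Finset.card_sdiff_of_subset hXb, (hB b hb).2]⟩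
  · intro T hTVX hTt
    obtain ⟨hTV, hTX⟩ := Finset.subset_sdiff.1 hTVX
    have hcard : (T ∪ X).card = t := by
      rw [Finset.card_union_of_disjoint hTX]
      omega
    have hblocks : (B.filter (X ⊆ ·)).filter (fun b => T ⊆ b \ X) = B.filter (T ∪ X ⊆ ·) := by
      rw [Multiset.filter_filter]
      refine Multiset.filter_congr fun b _ => ?_
      rw [Finset.subset_sdiff, Finset.union_subset_iff]
      tauto
    rw [Multiset.filter_map, Multiset.card_map]
    convert hT _ (Finset.union_subset hTV hXV) hcard using 2
    exact hblocks

theorem coveringNumber_le_card (h : IsCovering v k t lam V B) :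
    coveringNumber lam v k t ≤ Multiset.card B := by
  have hcov := h.subtype.map (V.equivFinOfCardEq h.1).toEmbedding
  rw [Finset.map_univ_equiv] at hcov
  exact Nat.sInf_le ⟨_, by rw [Multiset.card_map, Multiset.card_map], hcov⟩

end IsCovering

theorem stmt1_general {α : Type*} [DecidableEq α] (v k t lam : ℕ)
    (V : Finset α) (B : Multiset (Finset α))
    (hcov : IsCovering v k t lam V B)
    (X : Finset α) (hXV : X ⊆ V) (hXt : X.card ≤ t) :
    coveringNumber lam (v - X.card) (k - X.card) (t - X.card)
      ≤ Multiset.card (B.filter (fun b => X ⊆ b)) := by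
  simpa only [Multiset.card_map] using (hcov.derived hXV hXt).coveringNumber_le_card

/-- If (V,𝓑) is a t-(v,k,λ) covering and X ⊆ V with |X| ≤ t, then the number of
blocks containing X is at least C_λ(v−|X|, k−|X|, t−|X|). -/
theorem stmt1 {α : Type*} [DecidableEq α] (v k t lam : ℕ)
    (ht : 0 < t) (htk : t ≤ k) (hkv : k ≤ v) (hlam : 0 < lam)
    (V : Finset α) (B : Multiset (Finset α))
    (hcov : IsCovering v k t lam V B)
    (X : Finset α) (hXV : X ⊆ V) (hXt : X.card ≤ t) :
    coveringNumber lam (v - X.card) (k - X.card) (t - X.card)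
      ≤ Multiset.card (B.filter (fun b => X ⊆ b)) :=
  stmt1_general v k t lam V B hcov X hXV hXt
end

section
/- Let s ≤ k be positive integers and let b_s, b_{s+1}, …, b_{2s} be positive reals satisfying b_{i+1} ≤ ((k−i)/(v−i)) · b_i for i = s, s+1, …, 2s−1, where v ≥ k + 1 (so in particular b_{2s−i} ≤ (C(k−s,s−i)/C(v−s,s−i)) · b_s for i = 0,…,s−1). Then ∑_{i=0}^{s−1} C(s,i) · C(v−s, s−i) · b_{2s−i} ≤ b_s · (C(k,s) − 1). -/
/-!
Chaining the ratio bounds from `b_s` to `b_{s+n}` gives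
`(v-s)(v-s-1)⋯(v-s-n+1) b_{s+n} ≤ (k-s)(k-s-1)⋯(k-s-n+1) b_s`, and dividing by `n!` gives
`C(v-s, n) b_{s+n} ≤ C(k-s, n) b_s`. Summing these for `n = s - i` against `C(s, i)` and using
Vandermonde's identity `∑_{i ≤ s} C(s,i) C(k-s,s-i) = C(k,s)`, whose term `i = s` is `1`, gives
the claim. The chaining needs the factors `k - i` to be nonnegative; this holds because the bound
at `i = k` would force `b_{k+1} ≤ 0`, so `2s ≤ k`.
-/

open Finset

theorem Nat.sum_range_succ_choose_mul_choose_sub (m n r : ℕ) :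
    ∑ i ∈ range (r + 1), m.choose i * n.choose (r - i) = (m + n).choose r := by
  rw [Nat.add_choose_eq, Nat.sum_antidiagonal_eq_sum_range_succ_mk]

theorem Nat.sum_range_choose_mul_choose_sub_eq_choose_sub_one {s k : ℕ} (hsk : s ≤ k) :
    ∑ i ∈ range s, (s.choose i : ℝ) * (k - s).choose (s - i) = k.choose s - 1 := by
  have h := Nat.sum_range_succ_choose_mul_choose_sub s (k - s) s
  rw [Nat.add_sub_cancel' hsk, sum_range_succ] at h
  rw [eq_sub_iff_add_eq]
  exact_mod_cast by simpa using h

theorem descFactorial_mul_le_of_step {b : ℕ → ℝ} {m K V n : ℕ}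
    (h : ∀ i < n, ((V - i : ℕ) : ℝ) * b (m + i + 1) ≤ ((K - i : ℕ) : ℝ) * b (m + i)) :
    (V.descFactorial n : ℝ) * b (m + n) ≤ K.descFactorial n * b m := by
  induction n with
  | zero => simp
  | succ n ih =>
    calc (V.descFactorial (n + 1) : ℝ) * b (m + (n + 1))
        = V.descFactorial n * ((V - n : ℕ) * b (m + n + 1)) := by
          rw [Nat.descFactorial_succ, ← add_assoc]; push_cast; ring
      _ ≤ V.descFactorial n * ((K - n : ℕ) * b (m + n)) := by
          exact mul_le_mul_of_nonneg_left (h n n.lt_succ_self) (by positivity)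
      _ = (K - n : ℕ) * (V.descFactorial n * b (m + n)) := by ring
      _ ≤ (K - n : ℕ) * (K.descFactorial n * b m) := by
          exact mul_le_mul_of_nonneg_left (ih fun i hi => h i (hi.trans n.lt_succ_self))
            (by positivity)
      _ = K.descFactorial (n + 1) * b m := by
          rw [Nat.descFactorial_succ]; push_cast; ring

theorem choose_mul_le_of_step {b : ℕ → ℝ} {m K V n : ℕ}
    (h : ∀ i < n, ((V - i : ℕ) : ℝ) * b (m + i + 1) ≤ ((K - i : ℕ) : ℝ) * b (m + i)) :
    (V.choose n : ℝ) * b (m + n) ≤ K.choose n * b m := by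
  have h' := descFactorial_mul_le_of_step h
  simp only [Nat.descFactorial_eq_factorial_mul_choose, Nat.cast_mul, mul_assoc] at h'
  exact le_of_mul_le_mul_left h' (by positivity)

theorem natCast_sub_mul_le_natCast_sub_mul {x y : ℝ} {j k v : ℕ} (hjk : j ≤ k) (hjv : j < v)
    (h : y ≤ ((k : ℝ) - j) / ((v : ℝ) - j) * x) :
    ((v - j : ℕ) : ℝ) * y ≤ ((k - j : ℕ) : ℝ) * x := by
  have hpos : (0 : ℝ) < v - j := sub_pos.mpr (by exact_mod_cast hjv)
  rw [div_mul_eq_mul_div, le_div_iff₀ hpos] at h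
  rw [Nat.cast_sub hjk, Nat.cast_sub hjv.le]
  linarith

theorem stmt5_general (s k v : ℕ) (hsk : s ≤ k) (hkv : k + 1 ≤ v)
    (b : ℕ → ℝ) (hbpos : ∀ i, 0 < b i)
    (hdec : ∀ i, s ≤ i → i ≤ 2 * s - 1 →
      b (i + 1) ≤ ((k : ℝ) - i) / ((v : ℝ) - i) * b i) :
    ∑ i ∈ Finset.range s,
        (s.choose i : ℝ) * ((v - s).choose (s - i) : ℝ) * b (2 * s - i)
      ≤ b s * ((k.choose s : ℝ) - 1) := by
  have hk : 2 * s ≤ k := by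
    by_contra! hk
    have h := hdec k hsk (by omega)
    rw [sub_self, zero_div, zero_mul] at h
    linarith [hbpos (k + 1)]
  have hstep : ∀ i < s,
      ((v - s - i : ℕ) : ℝ) * b (s + i + 1) ≤ ((k - s - i : ℕ) : ℝ) * b (s + i) := by
    intro i hi
    rw [Nat.sub_sub, Nat.sub_sub]
    exact natCast_sub_mul_le_natCast_sub_mul (by omega) (by omega) (hdec _ (by omega) (by omega))
  have hterm : ∀ i ∈ range s, (s.choose i : ℝ) * (v - s).choose (s - i) * b (2 * s - i)
      ≤ s.choose i * (k - s).choose (s - i) * b s := by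
    intro i hi
    have hi : i < s := mem_range.mp hi
    have h := choose_mul_le_of_step (n := s - i) fun j hj => hstep j (by omega)
    rw [show s + (s - i) = 2 * s - i by omega] at h
    simpa only [mul_assoc] using mul_le_mul_of_nonneg_left h (Nat.cast_nonneg (s.choose i))
  calc _ ≤ ∑ i ∈ range s, (s.choose i : ℝ) * (k - s).choose (s - i) * b s :=
        sum_le_sum hterm
    _ = b s * ((k.choose s : ℝ) - 1) := by
      rw [← sum_mul, Nat.sum_range_choose_mul_choose_sub_eq_choose_sub_one hsk, mul_comm]

/-- If positive reals b_s,…,b_{2s} satisfy b_{i+1} ≤ ((k−i)/(v−i))·b_i for s ≤ i ≤ 2s−1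
(with s ≤ k and v ≥ k+1), then ∑_{i=0}^{s−1} C(s,i)·C(v−s,s−i)·b_{2s−i} ≤ b_s·(C(k,s)−1). -/
theorem stmt5 (s k v : ℕ) (hs : 0 < s) (hsk : s ≤ k) (hkv : k + 1 ≤ v)
    (b : ℕ → ℝ) (hbpos : ∀ i, 0 < b i)
    (hdec : ∀ i, s ≤ i → i ≤ 2 * s - 1 →
      b (i + 1) ≤ ((k : ℝ) - i) / ((v : ℝ) - i) * b i) :
    ∑ i ∈ Finset.range s,
        (s.choose i : ℝ) * ((v - s).choose (s - i) : ℝ) * b (2 * s - i)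
      ≤ b s * ((k.choose s : ℝ) - 1) :=
  stmt5_general s k v hsk hkv b hbpos hdec
end

section
/- Let s, b_s be positive integers and α, β nonnegative reals with α ≥ 2β. Let (V,𝓑) be an incidence structure with |V| = v and all blocks of size k ≥ s, such that b(X) ≥ b_s for every s-subset X, and |𝓑| ≥ α·|𝓥₀| + β·|𝓥₁| where 𝓥ᵢ = {X ∈ C(V,s) : b(X) = b_s + i} for i ∈ {0,1}. Then |𝓑| ≥ (b_s(α−β)C(v,s) + α C(v,s)) / ((α−β)C(k,s) + 1). -/
/-!
Double counting gives `∑_X b(X) = |𝓑| C(k,s)`. Every `s`-subset outside `𝓥₀ ∪ 𝓥₁` has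
`b(X) ≥ b_s + 2`, so `(b_s + 2) C(v,s) ≤ |𝓑| C(k,s) + 2|𝓥₀| + |𝓥₁|`. Adding `α - β` times this
inequality, `α - 2β` times `|𝓥₀| + |𝓥₁| ≤ C(v,s)` and the hypothesis `α|𝓥₀| + β|𝓥₁| ≤ |𝓑|`
eliminates `|𝓥₀|` and `|𝓥₁|` and leaves the bound.
-/

open Finset

section DoubleCounting

variable {γ : Type*} [DecidableEq γ]

lemma filter_powersetCard_subset_eq_powersetCard {V b : Finset γ} (hb : b ⊆ V) (s : ℕ) :
    (V.powersetCard s).filter (· ⊆ b) = b.powersetCard s := by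
  ext X
  simp only [mem_filter, mem_powersetCard]
  exact ⟨fun ⟨⟨_, hXs⟩, hXb⟩ => ⟨hXb, hXs⟩, fun ⟨hXb, hXs⟩ => ⟨⟨hXb.trans hb, hXs⟩, hXb⟩⟩

lemma sum_card_filter_superset_eq {V : Finset γ} {B : Multiset (Finset γ)} {k : ℕ}
    (hB : ∀ b ∈ B, b ⊆ V ∧ b.card = k) (s : ℕ) :
    ∑ X ∈ V.powersetCard s, Multiset.card (B.filter (X ⊆ ·))
      = Multiset.card B * k.choose s := by
  induction B using Multiset.induction_on with
  | empty => simp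
  | cons a B ih =>
    obtain ⟨haV, hak⟩ := hB a (Multiset.mem_cons_self a B)
    simp only [← Multiset.countP_eq_card_filter, Multiset.countP_cons] at ih ⊢
    rw [sum_add_distrib, ih fun b hb => hB b (Multiset.mem_cons_of_mem hb), sum_boole,
      filter_powersetCard_subset_eq_powersetCard haV, card_powersetCard, hak,
      Multiset.card_cons, Nat.cast_id, add_one_mul]

end DoubleCounting

section ExcessCounting

variable {ι : Type*} (P : Finset ι) (f : ι → ℕ) (m : ℕ)

lemma mul_card_le_sum_add_card_filter (hf : ∀ i ∈ P, m ≤ f i) :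
    (m + 2) * #P ≤ ∑ i ∈ P, f i + 2 * #{i ∈ P | f i = m} + #{i ∈ P | f i = m + 1} := by
  rw [card_filter, card_filter, mul_sum, ← sum_add_distrib, ← sum_add_distrib, mul_comm,
    ← smul_eq_mul]
  refine card_nsmul_le_sum _ _ _ fun i hi => ?_
  have := hf i hi
  split_ifs <;> omega

lemma card_filter_eq_add_card_filter_eq_succ_le :
    #{i ∈ P | f i = m} + #{i ∈ P | f i = m + 1} ≤ #P := by
  classical
  rw [← card_union_of_disjoint (disjoint_filter.2 fun _ _ h => by omega), ← filter_or]
  exact card_filter_le _ _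

end ExcessCounting

lemma weighted_count_bound {n C N c₀ c₁ b α β : ℝ} (hβ : 0 ≤ β) (hαβ : 2 * β ≤ α)
    (hC : 0 ≤ C) (hsum : (b + 2) * N ≤ n * C + 2 * c₀ + c₁) (hc : c₀ + c₁ ≤ N)
    (hn : α * c₀ + β * c₁ ≤ n) :
    (b * (α - β) * N + α * N) / ((α - β) * C + 1) ≤ n := by
  have hαβ' : 0 ≤ α - β := by linarith
  rw [div_le_iff₀ (by positivity)]
  linarith [mul_le_mul_of_nonneg_left hsum hαβ',
    mul_le_mul_of_nonneg_left hc (by linarith : 0 ≤ α - 2 * β)]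

theorem stmt13_general {γ : Type*} [DecidableEq γ] (V : Finset γ) (B : Multiset (Finset γ))
    (v k s bs : ℕ) (α β : ℝ)
    (hv : V.card = v) (hβ : 0 ≤ β) (hαβ : 2 * β ≤ α)
    (hB : ∀ b ∈ B, b ⊆ V ∧ b.card = k)
    (hlow : ∀ X ∈ Finset.powersetCard s V,
      bs ≤ Multiset.card (B.filter (fun b => X ⊆ b)))
    (hcard : α * (((Finset.powersetCard s V).filter
          (fun X => Multiset.card (B.filter (fun b => X ⊆ b)) = bs)).card : ℝ)
        + β * (((Finset.powersetCard s V).filter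
          (fun X => Multiset.card (B.filter (fun b => X ⊆ b)) = bs + 1)).card : ℝ)
      ≤ (Multiset.card B : ℝ)) :
    ((bs : ℝ) * (α - β) * (v.choose s : ℝ) + α * (v.choose s : ℝ))
        / ((α - β) * (k.choose s : ℝ) + 1)
      ≤ (Multiset.card B : ℝ) := by
  set blocksOver : Finset γ → ℕ := fun X => Multiset.card (B.filter (X ⊆ ·))
  have hsum := mul_card_le_sum_add_card_filter _ blocksOver bs hlow
  have hdisj := card_filter_eq_add_card_filter_eq_succ_le (powersetCard s V) blocksOver bs
  rw [sum_card_filter_superset_eq hB, card_powersetCard, hv] at hsum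
  rw [card_powersetCard, hv] at hdisj
  exact weighted_count_bound hβ hαβ (Nat.cast_nonneg _) (by exact_mod_cast hsum)
    (by exact_mod_cast hdisj) hcard

/-- Lemma 6.2: if b(X) ≥ b_s for every s-subset X and |𝓑| ≥ α|𝓥₀| + β|𝓥₁| with
α ≥ 2β ≥ 0, where 𝓥ᵢ = {X : b(X) = b_s + i}, then
|𝓑| ≥ (b_s(α−β)C(v,s) + αC(v,s)) / ((α−β)C(k,s) + 1). -/
theorem stmt13 {γ : Type*} [DecidableEq γ] (V : Finset γ) (B : Multiset (Finset γ))
    (v k s bs : ℕ) (α β : ℝ)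
    (hv : V.card = v) (hs : 0 < s) (hbs : 0 < bs) (hsk : s ≤ k)
    (hα : 0 ≤ α) (hβ : 0 ≤ β) (hαβ : 2 * β ≤ α)
    (hB : ∀ b ∈ B, b ⊆ V ∧ b.card = k)
    (hlow : ∀ X ∈ Finset.powersetCard s V,
      bs ≤ Multiset.card (B.filter (fun b => X ⊆ b)))
    (hcard : α * (((Finset.powersetCard s V).filter
          (fun X => Multiset.card (B.filter (fun b => X ⊆ b)) = bs)).card : ℝ)
        + β * (((Finset.powersetCard s V).filter
          (fun X => Multiset.card (B.filter (fun b => X ⊆ b)) = bs + 1)).card : ℝ)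
      ≤ (Multiset.card B : ℝ)) :
    ((bs : ℝ) * (α - β) * (v.choose s : ℝ) + α * (v.choose s : ℝ))
        / ((α - β) * (k.choose s : ℝ) + 1)
      ≤ (Multiset.card B : ℝ) :=
  stmt13_general V B v k s bs α β hv hβ hαβ hB hlow hcard
end

section
/- Let n be a positive integer and G a finite multigraph. Then G contains an n-independent set of size at least ⌈∑_{u ∈ V(G)} f_n(deg_G(u))⌉, where f_n(x) = 1 − x/(2n) if x ≤ n and f_n(x) = (n+1)/(2(x+1)) if x ≥ n. -/
/-!
Write `f = f_n`. While some vertex has degree at least `n` in the current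
multigraph, delete a vertex `v` of maximum degree `Δ ≥ n`. On `[0, Δ]` every unit step of `f`
drops by at least `c = (n+1)/(2Δ(Δ+1))`, so a neighbour `u` joined to `v` by `μ u v` edges gains
at least `μ u v · c`; summed over the neighbours this is `Δ · c = f(Δ)`, exactly what `v` took
away. Hence `∑ f(deg)` never decreases, and when the process stops the remaining set is
`n`-independent and, as `f ≤ 1`, its size bounds the sum. Loops only enlarge degrees and `f` is antitone, so they can be ignored.
-/

open Finset

noncomputable def caroTuzaWeight (n d : ℕ) : ℝ :=
  if (d : ℝ) ≤ n then 1 - d / (2 * n) else (n + 1) / (2 * (d + 1))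

section Weight

variable {n : ℕ}

lemma caroTuzaWeight_le_one (d : ℕ) : caroTuzaWeight n d ≤ 1 := by
  unfold caroTuzaWeight
  split_ifs with h
  · have : (0 : ℝ) ≤ d / (2 * n) := by positivity
    linarith
  · rw [div_le_one (by positivity)]
    linarith

lemma caroTuzaWeight_of_le (hn : 0 < n) {d : ℕ} (h : n ≤ d) :
    caroTuzaWeight n d = (n + 1) / (2 * (d + 1)) := by
  have hn' : (0 : ℝ) < n := by exact_mod_cast hn
  unfold caroTuzaWeight
  split_ifs with hle
  · obtain rfl : d = n := le_antisymm (by exact_mod_cast hle) h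
    field_simp
    ring
  · rfl

lemma caroTuzaWeight_self_eq_mul (hn : 0 < n) {Δ : ℕ} (h : n ≤ Δ) :
    caroTuzaWeight n Δ = Δ * ((n + 1) / (2 * Δ * (Δ + 1))) := by
  have hΔ : (0 : ℝ) < Δ := by exact_mod_cast hn.trans_le h
  rw [caroTuzaWeight_of_le hn h]
  field_simp

lemma caroTuzaWeight_succ_add_le (hn : 0 < n) {j Δ : ℕ} (hj : j + 1 ≤ Δ) (hnΔ : n ≤ Δ) :
    caroTuzaWeight n (j + 1) + (n + 1) / (2 * Δ * (Δ + 1)) ≤ caroTuzaWeight n j := by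
  have hn' : (0 : ℝ) < n := by exact_mod_cast hn
  have hj' : (j : ℝ) + 1 ≤ Δ := by exact_mod_cast hj
  have hnΔ' : (n : ℝ) ≤ Δ := by exact_mod_cast hnΔ
  have hΔ : (0 : ℝ) < Δ := by linarith
  rcases lt_or_ge j n with hjn | hnj
  · have hjn' : (j : ℝ) + 1 ≤ n := by exact_mod_cast hjn
    have hdrop : (n + 1 : ℝ) / (2 * Δ * (Δ + 1)) ≤ 1 / (2 * n) := by
      rw [div_le_div_iff₀ (by positivity) (by positivity)]
      nlinarith
    unfold caroTuzaWeight
    rw [if_pos (by push_cast; linarith), if_pos (by linarith)]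
    push_cast
    have hlinear : (1 : ℝ) - (j + 1) / (2 * n) = 1 - j / (2 * n) - 1 / (2 * n) := by ring
    linarith
  · have hdrop : (n + 1 : ℝ) / (2 * Δ * (Δ + 1)) ≤ (n + 1) / (2 * (j + 1) * (j + 2)) :=
      div_le_div_of_nonneg_left (by positivity) (by positivity) (by nlinarith)
    rw [caroTuzaWeight_of_le hn hnj, caroTuzaWeight_of_le hn (by omega)]
    push_cast
    have hhyperbolic : (n + 1 : ℝ) / (2 * (j + 1)) - (n + 1) / (2 * (j + 1 + 1))
        = (n + 1) / (2 * (j + 1) * (j + 2)) := by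
      field_simp
      ring
    linarith

lemma caroTuzaWeight_add_add_le (hn : 0 < n) {d m Δ : ℕ} (h : d + m ≤ Δ) (hnΔ : n ≤ Δ) :
    caroTuzaWeight n (d + m) + m * ((n + 1) / (2 * Δ * (Δ + 1))) ≤ caroTuzaWeight n d := by
  induction m with
  | zero => simp
  | succ m ih =>
    have hstep := caroTuzaWeight_succ_add_le hn (j := d + m) (by omega) hnΔ
    have hprev := ih (by omega)
    rw [← add_assoc]
    push_cast
    linarith

lemma caroTuzaWeight_antitone (hn : 0 < n) : Antitone (caroTuzaWeight n) := by
  refine antitone_nat_of_succ_le fun d => ?_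
  have hstep :=
    caroTuzaWeight_succ_add_le hn (Δ := max (d + 1) n) (le_max_left _ _) (le_max_right _ _)
  have hpos : (0 : ℝ) ≤ (n + 1) / (2 * (max (d + 1) n : ℕ) * ((max (d + 1) n : ℕ) + 1)) := by
    positivity
  linarith

end Weight

section Greedy

variable {V : Type*} [DecidableEq V] (μ : V → V → ℕ)

def inducedDegree (A : Finset V) (u : V) : ℕ := ∑ w ∈ A.erase u, μ u w

lemma inducedDegree_erase_add {A : Finset V} {u v : V} (hv : v ∈ A) (hu : u ∈ A.erase v) :
    inducedDegree μ (A.erase v) u + μ u v = inducedDegree μ A u := by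
  unfold inducedDegree
  rw [erase_right_comm]
  exact sum_erase_add _ _ (mem_erase.2 ⟨(ne_of_mem_erase hu).symm, hv⟩)

lemma sum_apply_erase_eq_inducedDegree (hsym : ∀ u w, μ u w = μ w u) (A : Finset V) (v : V) :
    ∑ u ∈ A.erase v, μ u v = inducedDegree μ A v :=
  sum_congr rfl fun u _ => hsym u v

variable {n : ℕ}

lemma sum_caroTuzaWeight_le_erase_max (hn : 0 < n) (hsym : ∀ u w, μ u w = μ w u)
    {A : Finset V} {v : V} (hv : v ∈ A) (hmax : ∀ u ∈ A, inducedDegree μ A u ≤ inducedDegree μ A v)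
    (hnv : n ≤ inducedDegree μ A v) :
    ∑ u ∈ A, caroTuzaWeight n (inducedDegree μ A u)
      ≤ ∑ u ∈ A.erase v, caroTuzaWeight n (inducedDegree μ (A.erase v) u) := by
  set Δ := inducedDegree μ A v
  set c : ℝ := (n + 1) / (2 * Δ * (Δ + 1))
  have hgain : ∀ u ∈ A.erase v, caroTuzaWeight n (inducedDegree μ A u) + μ u v * c
      ≤ caroTuzaWeight n (inducedDegree μ (A.erase v) u) := fun u hu => by
    have hdeg := inducedDegree_erase_add μ hv hu
    rw [← hdeg]
    exact caroTuzaWeight_add_add_le hn (hdeg ▸ hmax u (mem_of_mem_erase hu)) hnv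
  calc ∑ u ∈ A, caroTuzaWeight n (inducedDegree μ A u)
      = ∑ u ∈ A.erase v, caroTuzaWeight n (inducedDegree μ A u) + Δ * c := by
        rw [← sum_erase_add _ _ hv, caroTuzaWeight_self_eq_mul hn hnv]
    _ = ∑ u ∈ A.erase v, (caroTuzaWeight n (inducedDegree μ A u) + μ u v * c) := by
        rw [sum_add_distrib, ← sum_mul, ← Nat.cast_sum,
          sum_apply_erase_eq_inducedDegree μ hsym]
    _ ≤ ∑ u ∈ A.erase v, caroTuzaWeight n (inducedDegree μ (A.erase v) u) := sum_le_sum hgain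

theorem exists_subset_inducedDegree_lt_sum_caroTuzaWeight_le (hn : 0 < n)
    (hsym : ∀ u w, μ u w = μ w u) (A : Finset V) :
    ∃ S ⊆ A, (∀ u ∈ S, inducedDegree μ S u < n) ∧
      ∑ u ∈ A, caroTuzaWeight n (inducedDegree μ A u) ≤ #S := by
  induction A using strongInduction with
  | _ A ih =>
  by_cases hsparse : ∀ u ∈ A, inducedDegree μ A u < n
  · refine ⟨A, subset_rfl, hsparse, ?_⟩
    calc ∑ u ∈ A, caroTuzaWeight n (inducedDegree μ A u) ≤ ∑ _u ∈ A, (1 : ℝ) :=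
          sum_le_sum fun u _ => caroTuzaWeight_le_one _
      _ = #A := by simp
  · push Not at hsparse
    obtain ⟨u, hu, hnu⟩ := hsparse
    obtain ⟨v, hv, hmax⟩ := A.exists_max_image (inducedDegree μ A) ⟨u, hu⟩
    obtain ⟨S, hSA, hS, hsum⟩ := ih (A.erase v) (erase_ssubset hv)
    exact ⟨S, hSA.trans (erase_subset v A), hS,
      (sum_caroTuzaWeight_le_erase_max μ hn hsym hv hmax (hnu.trans (hmax u hu))).trans hsum⟩

end Greedy

theorem stmt14_general {Vt : Type*} [Fintype Vt] [DecidableEq Vt] (n : ℕ) (hn : 0 < n)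
    (μ : Vt → Vt → ℕ) (hsym : ∀ u w, μ u w = μ w u) :
    ∃ S : Finset Vt,
      (∀ u ∈ S, ∑ w ∈ S.erase u, μ u w < n) ∧
      (⌈∑ u : Vt,
          (if ((∑ w : Vt, μ u w : ℕ) : ℝ) ≤ n then
            1 - ((∑ w : Vt, μ u w : ℕ) : ℝ) / (2 * n)
          else ((n : ℝ) + 1) / (2 * (((∑ w : Vt, μ u w : ℕ) : ℝ) + 1)))⌉ : ℤ)
        ≤ (S.card : ℤ) := by
  obtain ⟨S, -, hS, hsum⟩ :=
    exists_subset_inducedDegree_lt_sum_caroTuzaWeight_le μ hn hsym (univ : Finset Vt)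
  refine ⟨S, hS, Int.ceil_le.2 ?_⟩
  have hloops : ∀ u, caroTuzaWeight n (∑ w, μ u w) ≤ caroTuzaWeight n (inducedDegree μ univ u) :=
    fun u => caroTuzaWeight_antitone hn (sum_le_sum_of_subset (erase_subset u univ))
  simpa only [caroTuzaWeight, Int.cast_natCast] using (sum_le_sum fun u _ => hloops u).trans hsum

/-- Caro–Tuza: a finite multigraph (given by a symmetric loopless edge-multiplicity
function μ) has an n-independent set S (i.e. every vertex of S has degree < n in the
sub-multigraph induced by S) of size at least ⌈∑_u f_n(deg u)⌉, where
f_n(x) = 1 − x/(2n) for x ≤ n and f_n(x) = (n+1)/(2(x+1)) for x ≥ n. -/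
theorem stmt14 {Vt : Type*} [Fintype Vt] [DecidableEq Vt] (n : ℕ) (hn : 0 < n)
    (μ : Vt → Vt → ℕ) (hsym : ∀ u w, μ u w = μ w u) (hloop : ∀ u, μ u u = 0) :
    ∃ S : Finset Vt,
      (∀ u ∈ S, ∑ w ∈ S.erase u, μ u w < n) ∧
      (⌈∑ u : Vt,
          (if ((∑ w : Vt, μ u w : ℕ) : ℝ) ≤ n then
            1 - ((∑ w : Vt, μ u w : ℕ) : ℝ) / (2 * n)
          else ((n : ℝ) + 1) / (2 * (((∑ w : Vt, μ u w : ℕ) : ℝ) + 1)))⌉ : ℤ)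
        ≤ (S.card : ℤ) :=
  stmt14_general n hn μ hsym
end

section
/- Let m, t, q be positive integers with q a prime power, and suppose there exists a t-(q^t, q^{t−1}, 1) covering with q·(q^t−1)/(q−1) blocks (e.g., the (t−1)-flats of AG(t,q)). Then C(v, m·q^{t−1}, t) ≤ q·(q^t−1)/(q−1) for every v with t ≤ v ≤ m·q^t. -/
theorem IsCovering.exists_comap {α β : Type*} [Fintype α] [Fintype β] [DecidableEq α]
    [DecidableEq β] {f : α → β} {w m k' k t lam : ℕ} {B : Multiset (Finset β)}
    (hB : IsCovering w k' t lam Finset.univ B)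
    (hfib : ∀ y, (Finset.univ.filter fun x => f x = y).card ≤ m)
    (ht : t ≤ w) (hk : m * k' ≤ k) (hkα : k ≤ Fintype.card α) :
    ∃ C : Multiset (Finset α), Multiset.card C = Multiset.card B ∧
      IsCovering (Fintype.card α) k t lam Finset.univ C := by
  obtain ⟨hw, hblocks, hcov⟩ := hB
  have hpreimage (b : Finset β) : (Finset.univ.filter fun x => f x ∈ b).card ≤ m * b.card :=
    Finset.card_le_mul_card_image_of_maps_to (f := f) (by simp) m fun y _ =>
      (Finset.card_le_card fun x => by simp +contextual).trans (hfib y)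
  have hpad (b : Finset β) (hb : b.card = k') :
      ∃ c : Finset α, (Finset.univ.filter fun x => f x ∈ b) ⊆ c ∧ c.card = k := by
    obtain ⟨c, hsub, -, hc⟩ := Finset.exists_subsuperset_card_eq (Finset.subset_univ _)
      ((hpreimage b).trans (hb ▸ hk)) (by simpa using hkα)
    exact ⟨c, hsub, hc⟩
  choose! g hg_sup hg_card using hpad
  refine ⟨B.map g, Multiset.card_map _ _, Finset.card_univ, fun c hc => ?_, fun T _ hT => ?_⟩
  · obtain ⟨b, hb, rfl⟩ := Multiset.mem_map.mp hc
    exact ⟨Finset.subset_univ _, hg_card b (hblocks b hb).2⟩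
  · obtain ⟨S, hTS, -, hS⟩ := Finset.exists_subsuperset_card_eq (Finset.subset_univ (T.image f))
      (Finset.card_image_le.trans hT.le) (hw ▸ ht)
    have hlift : ∀ b ∈ B, S ⊆ b → T ⊆ g b := fun b hb hSb x hx =>
      hg_sup b (hblocks b hb).2 (by simpa using hSb (hTS (Finset.mem_image_of_mem f hx)))
    calc lam ≤ Multiset.card (B.filter (S ⊆ ·)) := hcov S (Finset.subset_univ _) hS
      _ = Multiset.card (B.filter fun b => S ⊆ b ∧ T ⊆ g b) :=
          congrArg _ (Multiset.filter_congr fun b hb => ⟨fun h => ⟨h, hlift b hb h⟩, And.left⟩)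
      _ ≤ Multiset.card (B.filter fun b => T ⊆ g b) :=
          Multiset.card_le_card (Multiset.monotone_filter_right _ fun _ => And.right)
      _ = Multiset.card ((B.map g).filter (T ⊆ ·)) := by
          rw [Multiset.filter_map, Multiset.card_map]; rfl

theorem IsCovering.eq_zero_of_lt {α : Type*} [DecidableEq α] {v k t lam : ℕ} {V : Finset α}
    {B : Multiset (Finset α)} (hB : IsCovering v k t lam V B) (hvk : v < k) : B = 0 :=
  Multiset.eq_zero_of_forall_notMem fun b hb => by
    obtain ⟨hV, hblocks, -⟩ := hB
    have := Finset.card_le_card (hblocks b hb).1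
    have := (hblocks b hb).2
    omega

theorem coveringNumber_le {lam v k t : ℕ} {B : Multiset (Finset (Fin v))}
    (hB : IsCovering v k t lam Finset.univ B) : coveringNumber lam v k t ≤ Multiset.card B :=
  Nat.sInf_le ⟨B, rfl, hB⟩

theorem coveringNumber_eq_zero_of_lt {lam v k t : ℕ} (hvk : v < k) :
    coveringNumber lam v k t = 0 := by
  rw [coveringNumber, Nat.sInf_eq_zero]
  by_cases hne : {n | ∃ B : Multiset (Finset (Fin v)), Multiset.card B = n ∧
      IsCovering v k t lam Finset.univ B}.Nonempty
  · obtain ⟨n, B, rfl, hB⟩ := hne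
    exact Or.inl ⟨B, by simp [hB.eq_zero_of_lt hvk], hB⟩
  · exact Or.inr (Set.not_nonempty_iff_eq_empty.mp hne)

theorem Fin.card_filter_divNat_castLE_eq_le {v w m : ℕ} (h : v ≤ w * m) (y : Fin w) :
    (Finset.univ.filter fun i : Fin v => (Fin.castLE h i).divNat = y).card ≤ m := by
  calc _ ≤ (Finset.univ : Finset (Fin m)).card :=
        Finset.card_le_card_of_injOn (fun i => (Fin.castLE h i).modNat) (by simp) ?_
    _ = m := Finset.card_fin m
  intro i hi j hj hij
  simp only [Finset.coe_filter, Finset.mem_univ, true_and, Set.mem_ofPred_eq] at hi hj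
  apply Fin.castLE_injective h
  apply finProdFinEquiv.symm.injective
  simp only [finProdFinEquiv_symm_apply, hi, hj]
  exact congrArg _ hij

theorem stmt15_general (m t q N : ℕ) (hq : IsPrimePow q)
    (hexists : ∃ B : Multiset (Finset (Fin (q ^ t))), Multiset.card B = N ∧
      IsCovering (q ^ t) (q ^ (t - 1)) t 1 Finset.univ B) :
    ∀ v, t ≤ v → v ≤ m * q ^ t →
      coveringNumber 1 v (m * q ^ (t - 1)) t ≤ N := by
  intro v _ hv
  obtain ⟨B, rfl, hB⟩ := hexists
  rcases lt_or_ge v (m * q ^ (t - 1)) with hlt | hge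
  · simp [coveringNumber_eq_zero_of_lt hlt]
  have htq : t ≤ q ^ t := (Nat.lt_pow_self hq.one_lt).le
  obtain ⟨C, hC, hCcov⟩ := hB.exists_comap
    (Fin.card_filter_divNat_castLE_eq_le (mul_comm m _ ▸ hv)) htq le_rfl (by simpa using hge)
  rw [Fintype.card_fin] at hCcov
  exact hC ▸ coveringNumber_le hCcov

/-- Blow-up bound: if q is a prime power and there is a t-(q^t, q^{t−1}, 1) covering
with N = q(q^t−1)/(q−1) blocks, then C(v, m q^{t−1}, t) ≤ N for all t ≤ v ≤ m q^t. -/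
theorem stmt15 (m t q N : ℕ) (hm : 0 < m) (ht : 0 < t) (hq : IsPrimePow q)
    (hN : N * (q - 1) = q * (q ^ t - 1))
    (hexists : ∃ B : Multiset (Finset (Fin (q ^ t))), Multiset.card B = N ∧
      IsCovering (q ^ t) (q ^ (t - 1)) t 1 Finset.univ B) :
    ∀ v, t ≤ v → v ≤ m * q ^ t →
      coveringNumber 1 v (m * q ^ (t - 1)) t ≤ N :=
  stmt15_general m t q N hq hexists
end

section
/- Let v, m, q, t be positive integers with q ≥ 2, m ≥ 2q+2, 2 ≤ t < m·q^{t−1}, and m·q^t − 2q + 3 ≤ v ≤ m·q^t. Define ℓ_t = 1 and ℓ_i = ⌈((v−i)/(m q^{t−1} − i)) · ℓ_{i+1}⌉ for i = t−1, t−2, …, 2. Then ℓ_i = (q^{t−i+1} − 1)/(q − 1) for i = t−1, t−2, …, 2. -/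
/-!
Put `K = m q^(t-1)`, so that `v = qK - q + 1 + c` with `-q + 2 ≤ c ≤ q - 1`. Then
`(v - i) ℓ / (K - i) = q ℓ + ((i - 1)(q - 1) + c) ℓ / (K - i)`, and for `i ≥ 2` the last term
lies in `(0, 1]` as long as `ℓ ≤ (K - i) / (i (q - 1))`. The values `ℓ_{i+1} = 1 + q + ⋯ + q^(t-i-1)`
satisfy this bound because `i ≤ q^(i-1)`, so by downward induction
`ℓ_i = q ℓ_{i+1} + 1 = 1 + q + ⋯ + q^(t-i)`.
-/

open Finset

lemma Int.ceil_div_eq_add_one {α : Type*} [Field α] [LinearOrder α] [IsStrictOrderedRing α]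
    [FloorRing α] {x D : α} {n : ℤ} (hD : 0 < D) (h₁ : n * D < x) (h₂ : x ≤ n * D + D) :
    ⌈x / D⌉ = n + 1 := by
  rw [Int.ceil_eq_iff, lt_div_iff₀ hD, div_le_iff₀ hD]
  push_cast
  constructor <;> linarith

lemma Nat.mul_pow_le_pow_sub_one_add {q : ℕ} (hq : 2 ≤ q) (i n : ℕ) :
    i * q ^ n ≤ q ^ (i - 1 + n) := by
  have hi : i ≤ q ^ (i - 1) := by
    have := Nat.lt_pow_self (n := i - 1) (by omega : 1 < q)
    omega
  rw [pow_add]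
  exact Nat.mul_le_mul_right _ hi

lemma ceil_schoenheim_step {q K v i ℓ : ℕ} (hq : 1 ≤ q) (hi : 2 ≤ i) (hiK : i < K)
    (hv₁ : q * K + 3 ≤ v + 2 * q) (hv₂ : v ≤ q * K) (hℓ : 1 ≤ ℓ)
    (hℓK : i * (q - 1) * ℓ + i ≤ K) :
    ⌈((v : ℚ) - i) / ((K : ℚ) - i) * ℓ⌉ = q * ℓ + 1 := by
  have hD : (0 : ℚ) < K - i := by
    have : (i : ℚ) < K := by exact_mod_cast hiK
    linarith
  have hv₁' : (q : ℚ) * K + 3 ≤ v + 2 * q := by exact_mod_cast hv₁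
  have hv₂' : (v : ℚ) ≤ q * K := by exact_mod_cast hv₂
  have hℓ' : (1 : ℚ) ≤ ℓ := by exact_mod_cast hℓ
  have hℓK' : (i : ℚ) * (q - 1) * ℓ + i ≤ K := by
    have := hℓK; zify [hq] at this; exact_mod_cast this
  have hi' : (2 : ℚ) ≤ i := by exact_mod_cast hi
  have hq' : (1 : ℚ) ≤ q := by exact_mod_cast hq
  -- `e = (i - 1)(q - 1) + c` in the notation of the header
  set e : ℚ := v - q * K + (q - 1) * i with he
  have hsplit : ((v : ℚ) - i) * ℓ = q * ℓ * (K - i) + e * ℓ := by rw [he]; ring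
  have he₁ : 1 ≤ e := by nlinarith
  have he₂ : e ≤ (q - 1) * i := by linarith
  have heℓ : 0 < e * ℓ := by positivity
  have heℓK : e * ℓ ≤ K - i :=
    calc e * ℓ ≤ (q - 1) * i * ℓ := by gcongr
      _ ≤ K - i := by linarith
  rw [div_mul_eq_mul_div]
  apply Int.ceil_div_eq_add_one hD <;> push_cast <;> linarith

lemma eq_geom_sum_of_schoenheim_recursion {q K v t : ℕ} {L : ℕ → ℕ} (hq : 2 ≤ q) (htK : t < K)
    (hpowK : q ^ (t - 1) ≤ K) (hv₁ : q * K + 3 ≤ v + 2 * q) (hv₂ : v ≤ q * K) (hLt : L t = 1)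
    (hL : ∀ i, 2 ≤ i → i < t →
      (L i : ℤ) = ⌈((v : ℚ) - i) / ((K : ℚ) - i) * (L (i + 1) : ℚ)⌉) (n : ℕ) :
    ∀ i, 2 ≤ i → i + n = t → L i = ∑ k ∈ range (n + 1), q ^ k := by
  induction n with
  | zero => intro i _ hi; simp [show i = t by omega, hLt]
  | succ n ih =>
    intro i hi hin
    have hbound : i * (q - 1) * ∑ k ∈ range (n + 1), q ^ k + i ≤ K := by
      rw [mul_assoc, mul_comm (q - 1), geom_sum_mul_of_one_le (by omega), Nat.mul_sub_one,
        Nat.sub_add_cancel (Nat.le_mul_of_pos_right _ (by positivity))]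
      calc i * q ^ (n + 1) ≤ q ^ (i - 1 + (n + 1)) := Nat.mul_pow_le_pow_sub_one_add hq i _
        _ = q ^ (t - 1) := by congr 1; omega
        _ ≤ K := hpowK
    have hstep := hL i hi (by omega)
    rw [ih (i + 1) (by omega) (by omega), ceil_schoenheim_step (by omega) hi (by omega) hv₁ hv₂
      (by rw [geom_sum_succ]; omega) hbound] at hstep
    rw [geom_sum_succ]
    exact_mod_cast hstep

theorem stmt16_general (v m q t : ℕ) (hq : 2 ≤ q)
    (htk : t < m * q ^ (t - 1))
    (hv1 : m * q ^ t - 2 * q + 3 ≤ v) (hv2 : v ≤ m * q ^ t)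
    (L : ℕ → ℕ) (hLt : L t = 1)
    (hL : ∀ i, 2 ≤ i → i < t →
      (L i : ℤ) = ⌈(((v : ℚ) - i) / ((m : ℚ) * q ^ (t - 1) - i)) * (L (i + 1) : ℚ)⌉) :
    ∀ i, 2 ≤ i → i ≤ t - 1 → L i * (q - 1) = q ^ (t - i + 1) - 1 := by
  intro i hi hit
  have hm : 0 < m := Nat.pos_of_ne_zero (by rintro rfl; simp at htk)
  have hpowK : q ^ (t - 1) ≤ m * q ^ (t - 1) := Nat.le_mul_of_pos_left _ hm
  have hqK : m * q ^ t = q * (m * q ^ (t - 1)) := by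
    rw [← pow_sub_one_mul (by omega : t ≠ 0)]; ring
  have hKQ : ((m * q ^ (t - 1) : ℕ) : ℚ) = m * q ^ (t - 1) := by push_cast; rfl
  rw [hqK] at hv1 hv2
  simp only [← hKQ] at hL
  generalize m * q ^ (t - 1) = K at *
  have h2qK : 2 * q ≤ q * K := by rw [mul_comm]; exact Nat.mul_le_mul_left q (by omega)
  rw [eq_geom_sum_of_schoenheim_recursion hq htk hpowK (by omega) hv2 hLt hL (t - i) i hi
    (by omega), geom_sum_mul_of_one_le (by omega)]

/-- Lemma 7.3(i): with ℓ_t = 1 and ℓ_i = ⌈((v−i)/(m q^{t−1} − i))·ℓ_{i+1}⌉ for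
2 ≤ i < t, one has ℓ_i = (q^{t−i+1} − 1)/(q − 1) for i = t−1, …, 2. -/
theorem stmt16 (v m q t : ℕ) (hq : 2 ≤ q) (hm : 2 * q + 2 ≤ m)
    (ht : 2 ≤ t) (htk : t < m * q ^ (t - 1))
    (hv1 : m * q ^ t - 2 * q + 3 ≤ v) (hv2 : v ≤ m * q ^ t)
    (L : ℕ → ℕ) (hLt : L t = 1)
    (hL : ∀ i, 2 ≤ i → i < t →
      (L i : ℤ) = ⌈(((v : ℚ) - i) / ((m : ℚ) * q ^ (t - 1) - i)) * (L (i + 1) : ℚ)⌉) :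
    ∀ i, 2 ≤ i → i ≤ t - 1 → L i * (q - 1) = q ^ (t - i + 1) - 1 :=
  stmt16_general v m q t hq htk hv1 hv2 L hLt hL
end

section
/- Let s be a positive integer, v ≥ s·k where k ≥ 2s+1, and let b_{s}, …, b_{2s} be positive integers satisfying b_i ≥ ⌈((v−i)/(k−i)) · b_{i+1}⌉ for i = s, …, 2s−1. Define a_j = ∑_{i=0}^{j} (−1)^{i+j} C(j,i) b_{2s−i} for 0 ≤ j ≤ s. Then a_j ≥ 0 for all j ∈ {0, …, s}. -/
/-!
The hypotheses force `s * b (i + 1) ≤ b i` for `s ≤ i < 2s`, since `(v - i) / (k - i) ≥ s`.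
Hence, for `j ≤ s`, the terms `C(j, i) b_{2s-i}` of the alternating sum defining `a_j` are
nondecreasing in `i` (because `C(j, i) ≤ j C(j, i + 1)`), and an alternating sum of a
nondecreasing nonnegative sequence ending with a `+` sign is nonnegative.
-/

open Finset

section AlternatingSum

variable {R : Type*} [CommRing R]

lemma alternating_sum_range_succ (t : ℕ → R) (n : ℕ) :
    ∑ i ∈ range (n + 2), (-1) ^ (i + (n + 1)) * t i =
      t (n + 1) - ∑ i ∈ range (n + 1), (-1) ^ (i + n) * t i := by
  rw [sum_range_succ, ← Nat.add_assoc, Even.neg_one_pow ⟨n + 1, by ring⟩, one_mul,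
    sub_eq_add_neg, add_comm, ← sum_neg_distrib]
  congr 1
  refine sum_congr rfl fun i _ => ?_
  rw [← Nat.add_assoc, pow_succ]
  ring

variable [PartialOrder R] [IsOrderedRing R]

-- The upper bound by the last term is the invariant that carries the induction.
lemma alternating_sum_mem_Icc_of_monotone {t : ℕ → R} {n : ℕ} (h0 : 0 ≤ t 0)
    (hmono : ∀ i < n, t i ≤ t (i + 1)) :
    ∑ i ∈ range (n + 1), (-1) ^ (i + n) * t i ∈ Set.Icc 0 (t n) := by
  induction n with
  | zero => simpa using h0
  | succ n ih =>
    obtain ⟨hlow, hhigh⟩ := ih fun i hi => hmono i (by omega)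
    have hstep := hmono n (by omega)
    rw [alternating_sum_range_succ]
    exact ⟨sub_nonneg.2 (hhigh.trans hstep), sub_le_self _ hlow⟩

lemma alternating_sum_nonneg_of_monotone {t : ℕ → R} {n : ℕ} (h0 : 0 ≤ t 0)
    (hmono : ∀ i < n, t i ≤ t (i + 1)) :
    0 ≤ ∑ i ∈ range (n + 1), (-1) ^ (i + n) * t i :=
  (alternating_sum_mem_Icc_of_monotone h0 hmono).1

end AlternatingSum

lemma Nat.choose_le_mul_choose_succ {n i : ℕ} (hi : i < n) :
    n.choose i ≤ n * n.choose (i + 1) :=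
  calc n.choose i ≤ n.choose i * (n - i) := Nat.le_mul_of_pos_right _ (by omega)
    _ = n.choose (i + 1) * (i + 1) := (Nat.choose_succ_right_eq n i).symm
    _ ≤ n.choose (i + 1) * n := Nat.mul_le_mul_left _ hi
    _ = n * n.choose (i + 1) := Nat.mul_comm _ _

lemma Nat.choose_mul_le_choose_succ_mul {n i c c' : ℕ} (hi : i < n) (hc : n * c ≤ c') :
    n.choose i * c ≤ n.choose (i + 1) * c' :=
  calc n.choose i * c ≤ n * n.choose (i + 1) * c :=
        Nat.mul_le_mul_right _ (Nat.choose_le_mul_choose_succ hi)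
    _ = n.choose (i + 1) * (n * c) := by ring
    _ ≤ n.choose (i + 1) * c' := Nat.mul_le_mul_left _ hc

lemma le_div_sub_of_mul_le {α : Type*} [Field α] [LinearOrder α] [IsStrictOrderedRing α]
    {s k v i : α} (hs : 1 ≤ s) (hi : 0 ≤ i) (hik : i < k) (hv : s * k ≤ v) :
    s ≤ (v - i) / (k - i) := by
  rw [le_div_iff₀ (sub_pos.2 hik)]
  nlinarith

lemma mul_le_of_ceil_mul_le {α : Type*} [Ring α] [LinearOrder α] [IsStrictOrderedRing α]
    [FloorRing α] {a r x : α} {y : ℤ} (hr : a ≤ r) (hx : 0 ≤ x) (h : ⌈r * x⌉ ≤ y) :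
    a * x ≤ y :=
  (mul_le_mul_of_nonneg_right hr hx).trans ((Int.le_ceil _).trans (by exact_mod_cast h))

theorem stmt18_general (s k v : ℕ) (hs : 0 < s) (hk : 2 * s + 1 ≤ k) (hv : s * k ≤ v)
    (b : ℕ → ℕ)
    (hrec : ∀ i, s ≤ i → i ≤ 2 * s - 1 →
      (⌈(((v : ℚ) - i) / ((k : ℚ) - i)) * (b (i + 1) : ℚ)⌉ : ℤ) ≤ (b i : ℤ)) :
    ∀ j ≤ s,
      (0 : ℤ) ≤ ∑ i ∈ Finset.range (j + 1),
        (-1 : ℤ) ^ (i + j) * (j.choose i : ℤ) * (b (2 * s - i) : ℤ) := by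
  have hgrowth : ∀ i, s ≤ i → i ≤ 2 * s - 1 → s * b (i + 1) ≤ b i := by
    intro i hsi hi
    have hratio : (s : ℚ) ≤ ((v : ℚ) - i) / ((k : ℚ) - i) :=
      le_div_sub_of_mul_le (by exact_mod_cast hs) (by positivity)
        (by exact_mod_cast (show i < k by omega)) (by exact_mod_cast hv)
    exact_mod_cast mul_le_of_ceil_mul_le hratio (by positivity) (hrec i hsi hi)
  intro j hj
  have hterms : ∀ i < j, j.choose i * b (2 * s - i) ≤ j.choose (i + 1) * b (2 * s - (i + 1)) := by
    intro i hi
    refine Nat.choose_mul_le_choose_succ_mul hi ?_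
    have h := hgrowth (2 * s - (i + 1)) (by omega) (by omega)
    rw [show 2 * s - (i + 1) + 1 = 2 * s - i by omega] at h
    exact (Nat.mul_le_mul_right _ hj).trans h
  have h := alternating_sum_nonneg_of_monotone (R := ℤ)
    (t := fun i => ((j.choose i * b (2 * s - i) : ℕ) : ℤ)) (by positivity)
    fun i hi => by exact_mod_cast hterms i hi
  simpa [mul_assoc] using h

/-- Remark 2.4 (case v ≥ sk): if positive integers b_s,…,b_{2s} satisfy
b_i ≥ ⌈((v−i)/(k−i))·b_{i+1}⌉ for s ≤ i ≤ 2s−1, where v ≥ s·k and k ≥ 2s+1, then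
a_j = ∑_{i=0}^{j} (−1)^{i+j} C(j,i) b_{2s−i} ≥ 0 for all 0 ≤ j ≤ s. -/
theorem stmt18 (s k v : ℕ) (hs : 0 < s) (hk : 2 * s + 1 ≤ k) (hv : s * k ≤ v)
    (b : ℕ → ℕ) (hbpos : ∀ i, s ≤ i → i ≤ 2 * s → 0 < b i)
    (hrec : ∀ i, s ≤ i → i ≤ 2 * s - 1 →
      (⌈(((v : ℚ) - i) / ((k : ℚ) - i)) * (b (i + 1) : ℚ)⌉ : ℤ) ≤ (b i : ℤ)) :
    ∀ j ≤ s,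
      (0 : ℤ) ≤ ∑ i ∈ Finset.range (j + 1),
        (-1 : ℤ) ^ (i + j) * (j.choose i : ℤ) * (b (2 * s - i) : ℤ) :=
  stmt18_general s k v hs hk hv b hrec
end
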